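/- (Transformation of the spurious drift, Eq. (83)) For every x ∈ U, with y = φ(x): (1/√(det g'(y))) ∂_{y^b} ( √(det g') L'^{ab} )(y) = (∂φ^a/∂x^i)(x) · (1/√(det g(x))) ∂_{x^j} ( √(det g) L^{ij} )(x) + (∂²φ^a/∂x^i ∂x^j)(x) · B^{ij}(x), for each index a, where B^{ij} = ½(L^{ij} + L^{ji}). -/

import Mathlib

/-!
On `V` the density `√det g' L'^{ab}` is the Piola transform of the vector field
`H^j = √det g (∂φ^a/∂x^i) L^{ij}` on `U`: it equals `|det Dψ| (Dφ ∘ ψ)^b_j (H^j ∘ ψ)`, because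
`g' = Dψᵀ (g ∘ ψ) Dψ` gives `√det g' = |det Dψ| √(det g ∘ ψ)`. By the Piola identity (the rows of
the cofactor matrix of a Jacobian are divergence free, by Jacobi's formula and the symmetry of
second derivatives) the divergence of a Piola transform is `|det Dψ|` times the divergence of `H`
at `ψ y`.
Expanding `∂_j H^j` by the product rule leaves the term `(∂²φ^a/∂x^i∂x^j) L^{ij}`, which only sees
the symmetric part of `L`.
-/

open Real

/-- Partial derivative `∂_k f` of a scalar field on `ℝ^d`, at a point. -/
noncomputable def pd {d : ℕ} (f : (Fin d → ℝ) → ℝ) (k : Fin d) (x : Fin d → ℝ) : ℝ :=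
  fderiv ℝ f x (Pi.single k 1)

/-- Second partial derivative `∂_i ∂_j f` of a scalar field on `ℝ^d`, at a point. -/
noncomputable def pd2 {d : ℕ} (f : (Fin d → ℝ) → ℝ) (i j : Fin d) (x : Fin d → ℝ) : ℝ :=
  pd (fun y => pd f j y) i x

/-- The transformed (covariant) metric
`g'_{ab}(y) = (∂ψ^i/∂y^a) g_{ij}(ψ(y)) (∂ψ^j/∂y^b)`. -/
noncomputable def metricP (d : ℕ) (ψ : (Fin d → ℝ) → (Fin d → ℝ))
    (g : (Fin d → ℝ) → Matrix (Fin d) (Fin d) ℝ)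
    (y : Fin d → ℝ) : Matrix (Fin d) (Fin d) ℝ :=
  Matrix.of fun a b => ∑ i, ∑ j,
    pd (fun z => ψ z i) a y * g (ψ y) i j * pd (fun z => ψ z j) b y

/-- The transformed (contravariant) tensor
`L'^{ab}(y) = (∂φ^a/∂x^i)(ψ(y)) L^{ij}(ψ(y)) (∂φ^b/∂x^j)(ψ(y))`. -/
noncomputable def tensorP (d : ℕ) (φ ψ : (Fin d → ℝ) → (Fin d → ℝ))
    (L : (Fin d → ℝ) → Matrix (Fin d) (Fin d) ℝ)
    (y : Fin d → ℝ) : Matrix (Fin d) (Fin d) ℝ :=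
  Matrix.of fun a b => ∑ i, ∑ j,
    pd (fun z => φ z a) i (ψ y) * L (ψ y) i j * pd (fun z => φ z b) j (ψ y)

open Filter Topology Matrix

section PartialDerivative

variable {d : ℕ}

theorem pd_congr_of_eventuallyEq {f h : (Fin d → ℝ) → ℝ} {x : Fin d → ℝ} (hfh : f =ᶠ[𝓝 x] h)
    (k : Fin d) : pd f k x = pd h k x := by
  rw [pd, pd, hfh.fderiv_eq]

theorem pd_const (c : ℝ) (k : Fin d) (x : Fin d → ℝ) : pd (fun _ => c) k x = 0 := by
  simp [pd]

theorem pd_sum {ι : Type*} (u : Finset ι) {F : ι → (Fin d → ℝ) → ℝ} {x : Fin d → ℝ}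
    (h : ∀ i ∈ u, DifferentiableAt ℝ (F i) x) (k : Fin d) :
    pd (fun z => ∑ i ∈ u, F i z) k x = ∑ i ∈ u, pd (F i) k x := by
  simp [pd, fderiv_fun_sum h]

theorem pd_mul {f h : (Fin d → ℝ) → ℝ} {x : Fin d → ℝ}
    (hf : DifferentiableAt ℝ f x) (hh : DifferentiableAt ℝ h x) (k : Fin d) :
    pd (fun z => f z * h z) k x = pd f k x * h x + f x * pd h k x := by
  simp only [pd, fderiv_fun_mul hf hh, _root_.add_apply, _root_.smul_apply, smul_eq_mul]
  ring

theorem pd_const_mul {h : (Fin d → ℝ) → ℝ} {x : Fin d → ℝ} (c : ℝ) (k : Fin d) :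
    pd (fun z => c * h z) k x = c * pd h k x := by
  rw [pd, pd, show (fun z => c * h z) = c • h from rfl, fderiv_const_smul_field]
  rfl

theorem pd_prod {ι : Type*} [DecidableEq ι] (u : Finset ι) {F : ι → (Fin d → ℝ) → ℝ}
    {x : Fin d → ℝ} (h : ∀ i ∈ u, DifferentiableAt ℝ (F i) x) (k : Fin d) :
    pd (fun z => ∏ i ∈ u, F i z) k x = ∑ i ∈ u, pd (F i) k x * ∏ j ∈ u.erase i, F j x := by
  rw [pd, fderiv_finsetProd h]
  simp [pd, mul_comm]

theorem fderiv_apply_eq_sum_pd (f : (Fin d → ℝ) → ℝ) (x w : Fin d → ℝ) :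
    fderiv ℝ f x w = ∑ k, w k * pd f k x := by
  conv_lhs => rw [← Finset.univ_sum_single w]
  rw [map_sum]
  refine Finset.sum_congr rfl fun k _ => ?_
  rw [pd, ← smul_eq_mul, ← map_smul, ← Pi.single_smul', smul_eq_mul, mul_one]

theorem ContDiffAt.pd {n : ℕ} {f : (Fin d → ℝ) → ℝ} {x : Fin d → ℝ}
    (hf : ContDiffAt ℝ (n + 1) f x) (k : Fin d) : ContDiffAt ℝ n (pd f k) x :=
  (hf.fderiv_right (m := n) le_rfl).clm_apply contDiffAt_const

theorem pd2_comm {f : (Fin d → ℝ) → ℝ} {x : Fin d → ℝ} (hf : ContDiffAt ℝ 2 f x) (i j : Fin d) :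
    pd2 f i j x = pd2 f j i x := by
  have hdf : DifferentiableAt ℝ (fderiv ℝ f) x :=
    (hf.fderiv_right (m := 1) (by norm_num)).differentiableAt one_ne_zero
  have hsymm := hf.isSymmSndFDerivAt (by simp [minSmoothness_of_isRCLikeNormedField])
  have hpd : ∀ v w, fderiv ℝ (fun y => fderiv ℝ f y w) x v = fderiv ℝ (fderiv ℝ f) x v w := by
    intro v w
    simp [fderiv_clm_apply hdf (differentiableAt_const w)]
  simp only [pd2, pd, hpd]
  exact hsymm _ _

end PartialDerivative

section Jacobian

variable {d : ℕ}

noncomputable def jac (f : (Fin d → ℝ) → (Fin d → ℝ)) (x : Fin d → ℝ) : Matrix (Fin d) (Fin d) ℝ :=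
  Matrix.of fun p q => pd (fun z => f z p) q x

theorem jac_eq_toMatrix' {f : (Fin d → ℝ) → (Fin d → ℝ)} {x : Fin d → ℝ}
    (hf : DifferentiableAt ℝ f x) :
    jac f x = LinearMap.toMatrix' (fderiv ℝ f x : (Fin d → ℝ) →ₗ[ℝ] (Fin d → ℝ)) := by
  ext p q
  rw [jac, of_apply, pd, (hasFDerivAt_pi'.mp hf.hasFDerivAt p).fderiv, LinearMap.toMatrix'_apply]
  rfl

theorem jac_congr_of_eventuallyEq {f g : (Fin d → ℝ) → (Fin d → ℝ)} {x : Fin d → ℝ}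
    (hfg : f =ᶠ[𝓝 x] g) : jac f x = jac g x := by
  ext p q
  exact pd_congr_of_eventuallyEq (hfg.mono fun z hz => by rw [hz]) q

theorem differentiableAt_jac {f : (Fin d → ℝ) → (Fin d → ℝ)} {x : Fin d → ℝ}
    (hf : ContDiffAt ℝ 2 f x) (p q : Fin d) : DifferentiableAt ℝ (fun z => jac f z p q) x :=
  ((contDiffAt_pi.mp hf p).pd (n := 1) q).differentiableAt one_ne_zero

theorem jac_comp {φ ψ : (Fin d → ℝ) → (Fin d → ℝ)} {y : Fin d → ℝ}
    (hφ : DifferentiableAt ℝ φ (ψ y)) (hψ : DifferentiableAt ℝ ψ y) :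
    jac (fun z => φ (ψ z)) y = jac φ (ψ y) * jac ψ y := by
  rw [show (fun z => φ (ψ z)) = φ ∘ ψ from rfl, jac_eq_toMatrix' (hφ.comp y hψ),
    jac_eq_toMatrix' hφ, jac_eq_toMatrix' hψ, fderiv_comp y hφ hψ, ← LinearMap.toMatrix'_comp]
  rfl

theorem jac_id (y : Fin d → ℝ) : jac (fun z => z) y = 1 := by
  rw [show (fun z : Fin d → ℝ => z) = id from rfl, jac_eq_toMatrix' differentiableAt_id, fderiv_id]
  exact LinearMap.toMatrix'_id

theorem pd_comp {f : (Fin d → ℝ) → ℝ} {ψ : (Fin d → ℝ) → (Fin d → ℝ)} {y : Fin d → ℝ}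
    (hf : DifferentiableAt ℝ f (ψ y)) (hψ : DifferentiableAt ℝ ψ y) (b : Fin d) :
    pd (fun z => f (ψ z)) b y = ∑ k, jac ψ y k b * pd f k (ψ y) := by
  rw [pd, show (fun z => f (ψ z)) = f ∘ ψ from rfl, fderiv_comp y hf hψ,
    ContinuousLinearMap.comp_apply, fderiv_apply_eq_sum_pd, jac_eq_toMatrix' hψ]
  rfl

end Jacobian

section MatrixDerivative

variable {d : ℕ} {l m n : Type*} [Fintype l]

noncomputable def pdMatrix (M : (Fin d → ℝ) → Matrix m n ℝ) (b : Fin d) (x : Fin d → ℝ) :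
    Matrix m n ℝ :=
  Matrix.of fun i j => pd (fun z => M z i j) b x

theorem pdMatrix_mul {M : (Fin d → ℝ) → Matrix m l ℝ} {N : (Fin d → ℝ) → Matrix l n ℝ}
    {x : Fin d → ℝ} (hM : ∀ i j, DifferentiableAt ℝ (fun z => M z i j) x)
    (hN : ∀ i j, DifferentiableAt ℝ (fun z => N z i j) x) (b : Fin d) :
    pdMatrix (fun z => M z * N z) b x = pdMatrix M b x * N x + M x * pdMatrix N b x := by
  ext i j
  simp only [pdMatrix, of_apply, mul_apply, Matrix.add_apply, ← Finset.sum_add_distrib]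
  rw [pd_sum (F := fun k z => M z i k * N z k j) _ fun k _ => (hM i k).mul (hN k j)]
  exact Finset.sum_congr rfl fun k _ => pd_mul (hM i k) (hN k j) b

theorem pdMatrix_eq_zero_of_eventuallyEq {M : (Fin d → ℝ) → Matrix m n ℝ} {x : Fin d → ℝ}
    {C : Matrix m n ℝ} (hM : M =ᶠ[𝓝 x] fun _ => C) (b : Fin d) : pdMatrix M b x = 0 := by
  ext i j
  rw [pdMatrix, of_apply, pd_congr_of_eventuallyEq (h := fun _ => C i j)
    (hM.mono fun z hz => by rw [hz]), pd_const, Matrix.zero_apply]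

end MatrixDerivative

section Determinant

variable {d : ℕ}

theorem Matrix.det_updateCol_eq_sum_perm (M : Matrix (Fin d) (Fin d) ℝ) (p : Fin d)
    (v : Fin d → ℝ) :
    (M.updateCol p v).det
      = ∑ σ : Equiv.Perm (Fin d),
          (σ.sign : ℝ) * (v (σ p) * ∏ i ∈ Finset.univ.erase p, M (σ i) i) := by
  rw [det_apply']
  refine Finset.sum_congr rfl fun σ _ => ?_
  rw [← Finset.mul_prod_erase _ _ (Finset.mem_univ p), updateCol_self]
  congr 2
  exact Finset.prod_congr rfl fun i hi => updateCol_ne (Finset.ne_of_mem_erase hi)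

theorem differentiableAt_det {M : (Fin d → ℝ) → Matrix (Fin d) (Fin d) ℝ} {x : Fin d → ℝ}
    (hM : ∀ i j, DifferentiableAt ℝ (fun z => M z i j) x) :
    DifferentiableAt ℝ (fun z => (M z).det) x := by
  simp only [det_apply']
  exact DifferentiableAt.fun_sum fun σ _ =>
    (HasFDerivAt.finsetProd fun i _ => (hM (σ i) i).hasFDerivAt).differentiableAt.const_mul _

theorem pd_det {M : (Fin d → ℝ) → Matrix (Fin d) (Fin d) ℝ} {x : Fin d → ℝ}
    (hM : ∀ i j, DifferentiableAt ℝ (fun z => M z i j) x) (b : Fin d) :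
    pd (fun z => (M z).det) b x = ((M x).adjugate * pdMatrix M b x).trace := by
  have hcol : ((M x).adjugate * pdMatrix M b x).trace
      = ∑ p, ((M x).updateCol p fun r => pdMatrix M b x r p).det := by
    simp only [trace, diag, mul_apply, ← cramer_apply, cramer_eq_adjugate_mulVec, mulVec,
      dotProduct]
  have hprod : ∀ σ : Equiv.Perm (Fin d), DifferentiableAt ℝ (fun z => ∏ i, M z (σ i) i) x :=
    fun σ => (HasFDerivAt.finsetProd fun i _ => (hM (σ i) i).hasFDerivAt).differentiableAt
  simp only [det_apply']
  rw [pd_sum _ fun σ _ => (hprod σ).const_mul _, hcol]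
  simp only [det_updateCol_eq_sum_perm]
  rw [Finset.sum_comm]
  refine Finset.sum_congr rfl fun σ _ => ?_
  rw [pd_const_mul, pd_prod _ fun i _ => hM (σ i) i, Finset.mul_sum]
  rfl

end Determinant

theorem Matrix.sum_trace_mul_mul_apply_eq_of_symm {n R : Type*} [Fintype n] [CommSemiring R]
    (J : Matrix n n R) (D : n → Matrix n n R) (hD : ∀ b r p, D b r p = D p r b) (j : n) :
    ∑ b, (J * D b).trace * J b j = ∑ b, (J * D b * J) b j := by
  simp only [trace, diag, mul_apply, Finset.sum_mul]
  rw [Finset.sum_comm]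
  refine Finset.sum_congr rfl fun p _ => Finset.sum_congr rfl fun b _ =>
    Finset.sum_congr rfl fun r _ => ?_
  rw [hD]

noncomputable def divergence {d : ℕ} (F : Fin d → (Fin d → ℝ) → ℝ) (x : Fin d → ℝ) : ℝ :=
  ∑ b, pd (F b) b x

section Piola

variable {d : ℕ}

/-- Piola identity: the rows of the cofactor matrix `(det M) M⁻¹` of a Jacobian `M` are divergence
free. -/
theorem divergence_det_mul_eq_zero {M N : (Fin d → ℝ) → Matrix (Fin d) (Fin d) ℝ} {y : Fin d → ℝ}
    (hM : ∀ i j, DifferentiableAt ℝ (fun z => M z i j) y)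
    (hN : ∀ i j, DifferentiableAt ℝ (fun z => N z i j) y) (hNM : ∀ᶠ z in 𝓝 y, N z * M z = 1)
    (hdM : ∀ b r p, pdMatrix M b y r p = pdMatrix M p y r b) (j : Fin d) :
    divergence (fun b z => (M z).det * N z b j) y = 0 := by
  have hMN : M y * N y = 1 := mul_eq_one_comm.mp hNM.self_of_nhds
  have hadj : (M y).adjugate = (M y).det • N y := by
    rw [← Matrix.mul_one (M y).adjugate, ← hMN, ← Matrix.mul_assoc, adjugate_mul, smul_one_mul]
  have hdN : ∀ b, pdMatrix N b y = -(N y * pdMatrix M b y * N y) := by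
    intro b
    have h0 := pdMatrix_mul hN hM b
    rw [pdMatrix_eq_zero_of_eventuallyEq hNM, eq_comm] at h0
    rw [← Matrix.mul_one (pdMatrix N b y), ← hMN, ← Matrix.mul_assoc,
      eq_neg_of_add_eq_zero_left h0, Matrix.neg_mul]
  calc divergence (fun b z => (M z).det * N z b j) y
      = (M y).det * (∑ b, (N y * pdMatrix M b y).trace * N y b j
          - ∑ b, (N y * pdMatrix M b y * N y) b j) := by
        rw [divergence, mul_sub, Finset.mul_sum, Finset.mul_sum, ← Finset.sum_sub_distrib]
        refine Finset.sum_congr rfl fun b _ => ?_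
        rw [pd_mul (differentiableAt_det hM) (hN b j), pd_det hM, hadj, smul_mul_assoc,
          trace_smul, smul_eq_mul]
        change _ + _ * pdMatrix N b y b j = _
        rw [hdN, Matrix.neg_apply]
        ring
    _ = 0 := by rw [sum_trace_mul_mul_apply_eq_of_symm _ _ hdM, sub_self, mul_zero]

end Piola

theorem abs_eventuallyEq_sign_mul {X : Type*} [TopologicalSpace X] {f : X → ℝ} {x : X}
    (hf : ContinuousAt f x) (hx : f x ≠ 0) :
    (fun z => |f z|) =ᶠ[𝓝 x] fun z => (SignType.sign (f x) : ℝ) * f z := by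
  rcases hx.lt_or_gt with hneg | hpos
  · filter_upwards [hf.eventually (gt_mem_nhds hneg)] with z hz
    simp [sign_neg hneg, abs_of_neg hz]
  · filter_upwards [hf.eventually (lt_mem_nhds hpos)] with z hz
    simp [sign_pos hpos, abs_of_pos hz]

section ChangeOfVariables

variable {d : ℕ} {φ ψ : (Fin d → ℝ) → (Fin d → ℝ)} {y : Fin d → ℝ}

theorem eventually_jac_comp_mul_jac_eq_one (hψ : ContDiffAt ℝ 1 ψ y)
    (hφ : ContDiffAt ℝ 1 φ (ψ y)) (hφψ : ∀ᶠ z in 𝓝 y, φ (ψ z) = z) :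
    ∀ᶠ z in 𝓝 y, jac φ (ψ z) * jac ψ z = 1 := by
  filter_upwards [hψ.eventually (by simp), hψ.continuousAt.eventually (hφ.eventually (by simp)),
    hφψ.eventually_nhds] with z hψz hφz hφψz
  rw [← jac_comp (hφz.differentiableAt one_ne_zero) (hψz.differentiableAt one_ne_zero),
    jac_congr_of_eventuallyEq hφψz, jac_id]

theorem det_jac_ne_zero (hψ : ContDiffAt ℝ 1 ψ y) (hφ : ContDiffAt ℝ 1 φ (ψ y))
    (hφψ : ∀ᶠ z in 𝓝 y, φ (ψ z) = z) : (jac ψ y).det ≠ 0 := by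
  have h1 := congrArg det (eventually_jac_comp_mul_jac_eq_one hψ hφ hφψ).self_of_nhds
  rw [det_mul, det_one] at h1
  exact right_ne_zero_of_mul_eq_one h1

theorem divergence_det_jac_mul_jac_comp_eq_zero (hψ : ContDiffAt ℝ 2 ψ y)
    (hφ : ContDiffAt ℝ 2 φ (ψ y)) (hφψ : ∀ᶠ z in 𝓝 y, φ (ψ z) = z) (j : Fin d) :
    divergence (fun b z => (jac ψ z).det * jac φ (ψ z) b j) y = 0 := by
  refine divergence_det_mul_eq_zero (differentiableAt_jac hψ)
    (fun i j => (differentiableAt_jac hφ i j).comp y (hψ.differentiableAt (by simp)))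
    (eventually_jac_comp_mul_jac_eq_one (hψ.of_le (by simp)) (hφ.of_le (by simp)) hφψ)
    (fun b r p => pd2_comm (contDiffAt_pi.mp hψ r) b p) j

theorem divergence_det_jac_mul_sum (hψ : ContDiffAt ℝ 2 ψ y) (hφ : ContDiffAt ℝ 2 φ (ψ y))
    (hφψ : ∀ᶠ z in 𝓝 y, φ (ψ z) = z) {H : Fin d → (Fin d → ℝ) → ℝ}
    (hH : ∀ j, DifferentiableAt ℝ (H j) (ψ y)) :
    divergence (fun b z => (jac ψ z).det * ∑ j, jac φ (ψ z) b j * H j (ψ z)) y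
      = (jac ψ y).det * divergence H (ψ y) := by
  have hm : DifferentiableAt ℝ (fun z => (jac ψ z).det) y :=
    differentiableAt_det (differentiableAt_jac hψ)
  have hN : ∀ b j, DifferentiableAt ℝ (fun z => jac φ (ψ z) b j) y := fun b j =>
    (differentiableAt_jac hφ b j).comp y (hψ.differentiableAt two_ne_zero)
  have hHψ : ∀ j, DifferentiableAt ℝ (fun z => H j (ψ z)) y := fun j =>
    (hH j).comp y (hψ.differentiableAt two_ne_zero)
  have hKN : jac ψ y * jac φ (ψ y) = 1 := mul_eq_one_comm.mp
    (eventually_jac_comp_mul_jac_eq_one (hψ.of_le (by simp)) (hφ.of_le (by simp)) hφψ).self_of_nhds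
  have hterm : ∀ b, pd (fun z => (jac ψ z).det * ∑ j, jac φ (ψ z) b j * H j (ψ z)) b y
      = ∑ j, (pd (fun z => (jac ψ z).det * jac φ (ψ z) b j) b y * H j (ψ y)
          + (jac ψ y).det * ∑ k, (jac ψ y k b * jac φ (ψ y) b j) * pd (H j) k (ψ y)) := by
    intro b
    simp only [Finset.mul_sum, ← mul_assoc]
    rw [pd_sum (F := fun j z => (jac ψ z).det * jac φ (ψ z) b j * H j (ψ z)) _
      fun j _ => (hm.mul (hN b j)).mul (hHψ j)]
    refine Finset.sum_congr rfl fun j _ => ?_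
    rw [pd_mul (f := fun z => (jac ψ z).det * jac φ (ψ z) b j) (hm.mul (hN b j)) (hHψ j),
      pd_comp (hH j) (hψ.differentiableAt two_ne_zero), Finset.mul_sum]
    congr 1
    exact Finset.sum_congr rfl fun k _ => by ring
  have hcontract : ∀ j, ∑ b, ∑ k, jac ψ y k b * jac φ (ψ y) b j * pd (H j) k (ψ y)
      = pd (H j) j (ψ y) := by
    intro j
    simp only [Finset.sum_comm (γ := Fin d), ← Finset.sum_mul, ← mul_apply, hKN, one_apply,
      ite_mul, one_mul, zero_mul, Finset.sum_ite_eq', Finset.mem_univ, if_true]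
  calc divergence (fun b z => (jac ψ z).det * ∑ j, jac φ (ψ z) b j * H j (ψ z)) y
      = ∑ j, ∑ b, (pd (fun z => (jac ψ z).det * jac φ (ψ z) b j) b y * H j (ψ y)
          + (jac ψ y).det * ∑ k, (jac ψ y k b * jac φ (ψ y) b j) * pd (H j) k (ψ y)) := by
        rw [divergence, Finset.sum_congr rfl fun b _ => hterm b, Finset.sum_comm]
    _ = ∑ j, (divergence (fun b z => (jac ψ z).det * jac φ (ψ z) b j) y * H j (ψ y)
          + (jac ψ y).det * pd (H j) j (ψ y)) := by
        refine Finset.sum_congr rfl fun j _ => ?_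
        rw [Finset.sum_add_distrib, ← Finset.mul_sum, hcontract, divergence, Finset.sum_mul]
    _ = (jac ψ y).det * divergence H (ψ y) := by
        simp only [divergence_det_jac_mul_jac_comp_eq_zero hψ hφ hφψ, zero_mul, zero_add]
        rw [divergence, Finset.mul_sum]

theorem divergence_abs_det_jac_mul_sum (hψ : ContDiffAt ℝ 2 ψ y) (hφ : ContDiffAt ℝ 2 φ (ψ y))
    (hφψ : ∀ᶠ z in 𝓝 y, φ (ψ z) = z) {H : Fin d → (Fin d → ℝ) → ℝ}
    (hH : ∀ j, DifferentiableAt ℝ (H j) (ψ y)) :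
    divergence (fun b z => |(jac ψ z).det| * ∑ j, jac φ (ψ z) b j * H j (ψ z)) y
      = |(jac ψ y).det| * divergence H (ψ y) := by
  have habs := abs_eventuallyEq_sign_mul
    (differentiableAt_det (differentiableAt_jac hψ)).continuousAt
    (det_jac_ne_zero (hψ.of_le (by simp)) (hφ.of_le (by simp)) hφψ)
  calc divergence (fun b z => |(jac ψ z).det| * ∑ j, jac φ (ψ z) b j * H j (ψ z)) y
      = SignType.sign (jac ψ y).det
          * divergence (fun b z => (jac ψ z).det * ∑ j, jac φ (ψ z) b j * H j (ψ z)) y := by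
        rw [divergence, divergence, Finset.mul_sum]
        refine Finset.sum_congr rfl fun b _ => ?_
        rw [← pd_const_mul]
        exact pd_congr_of_eventuallyEq (habs.mono fun z hz => by simp only [hz, mul_assoc]) b
    _ = |(jac ψ y).det| * divergence H (ψ y) := by
        rw [divergence_det_jac_mul_sum hψ hφ hφψ hH, ← mul_assoc, sign_mul_self]

end ChangeOfVariables

theorem divergence_sum_mul {d : ℕ} {ι : Type*} [Fintype ι] {c : ι → (Fin d → ℝ) → ℝ}
    {G : ι → Fin d → (Fin d → ℝ) → ℝ} {x : Fin d → ℝ} (hc : ∀ i, DifferentiableAt ℝ (c i) x)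
    (hG : ∀ i j, DifferentiableAt ℝ (G i j) x) :
    divergence (fun j z => ∑ i, c i z * G i j z) x
      = ∑ i, (c i x * divergence (G i) x + ∑ j, pd (c i) j x * G i j x) := by
  rw [divergence, Finset.sum_congr rfl fun j _ =>
    pd_sum (F := fun i z => c i z * G i j z) _ (fun i _ => (hc i).mul (hG i j)) j,
    Finset.sum_comm]
  refine Finset.sum_congr rfl fun i _ => ?_
  rw [divergence, Finset.mul_sum, ← Finset.sum_add_distrib]
  refine Finset.sum_congr rfl fun j _ => ?_
  rw [pd_mul (hc i) (hG i j)]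
  ring

theorem sum_sum_mul_eq_sum_sum_mul_symmetrize {ι : Type*} [Fintype ι] {S : ι → ι → ℝ}
    (hS : ∀ i j, S i j = S j i) (L : ι → ι → ℝ) :
    ∑ i, ∑ j, S i j * L i j = ∑ i, ∑ j, S i j * ((L i j + L j i) / 2) := by
  have htranspose : ∑ i, ∑ j, S i j * L j i = ∑ i, ∑ j, S i j * L i j := by
    rw [Finset.sum_comm]
    exact Finset.sum_congr rfl fun i _ => Finset.sum_congr rfl fun j _ => by rw [hS]
  have hsplit : ∑ i, ∑ j, S i j * ((L i j + L j i) / 2)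
      = (∑ i, ∑ j, S i j * L i j + ∑ i, ∑ j, S i j * L j i) / 2 := by
    simp only [Finset.sum_div, ← Finset.sum_add_distrib]
    exact Finset.sum_congr rfl fun i _ => Finset.sum_congr rfl fun j _ => by ring
  rw [hsplit, htranspose]
  ring

theorem inv_mul_divergence_jac_mul_mul {d : ℕ} {φ : (Fin d → ℝ) → (Fin d → ℝ)} {x : Fin d → ℝ}
    (hφ : ContDiffAt ℝ 2 φ x) {ρ : (Fin d → ℝ) → ℝ} (hρ : DifferentiableAt ℝ ρ x) (hρ0 : ρ x ≠ 0)
    {L : (Fin d → ℝ) → Matrix (Fin d) (Fin d) ℝ}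
    (hL : ∀ i j, DifferentiableAt ℝ (fun z => L z i j) x) (a : Fin d) :
    (ρ x)⁻¹ * divergence (fun j z => ∑ i, jac φ z a i * (ρ z * L z i j)) x
      = ∑ i, pd (fun z => φ z a) i x * ((ρ x)⁻¹ * ∑ j, pd (fun z => ρ z * L z i j) j x)
        + ∑ i, ∑ j, pd2 (fun z => φ z a) i j x * ((L x i j + L x j i) / 2) := by
  have hsymm := pd2_comm (contDiffAt_pi.mp hφ a)
  rw [divergence_sum_mul (c := fun i z => jac φ z a i) (G := fun i j z => ρ z * L z i j)
      (differentiableAt_jac hφ a) fun i j => hρ.mul (hL i j),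
    ← sum_sum_mul_eq_sum_sum_mul_symmetrize hsymm (L x), Finset.mul_sum, ← Finset.sum_add_distrib]
  refine Finset.sum_congr rfl fun i _ => ?_
  rw [mul_add, Finset.mul_sum, divergence, mul_left_comm]
  congr 1
  refine Finset.sum_congr rfl fun j _ => ?_
  rw [show pd (fun z => jac φ z a i) j x = pd2 (fun z => φ z a) j i x from rfl, hsymm]
  field_simp

section TransformedFields

variable {d : ℕ} {φ ψ : (Fin d → ℝ) → (Fin d → ℝ)} {g : (Fin d → ℝ) → Matrix (Fin d) (Fin d) ℝ}

theorem metricP_eq_transpose_mul_mul (y : Fin d → ℝ) :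
    metricP d ψ g y = (jac ψ y)ᵀ * g (ψ y) * jac ψ y := by
  ext a b
  simp only [metricP, jac, mul_apply, transpose_apply, of_apply, Finset.sum_mul]
  rw [Finset.sum_comm]

theorem sqrt_det_metricP (y : Fin d → ℝ) :
    √(metricP d ψ g y).det = |(jac ψ y).det| * √(g (ψ y)).det := by
  rw [metricP_eq_transpose_mul_mul, det_mul, det_mul, det_transpose,
    show (jac ψ y).det * (g (ψ y)).det * (jac ψ y).det = (jac ψ y).det ^ 2 * (g (ψ y)).det by ring,
    Real.sqrt_mul (sq_nonneg _), Real.sqrt_sq_eq_abs]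

theorem sqrt_det_metricP_mul_tensorP (L : (Fin d → ℝ) → Matrix (Fin d) (Fin d) ℝ)
    (a b : Fin d) (y : Fin d → ℝ) :
    √(metricP d ψ g y).det * tensorP d φ ψ L y a b
      = |(jac ψ y).det| * ∑ j, jac φ (ψ y) b j *
          ∑ i, jac φ (ψ y) a i * (√(g (ψ y)).det * L (ψ y) i j) := by
  rw [sqrt_det_metricP, tensorP, of_apply, Finset.sum_comm, mul_assoc]
  congr 1
  simp only [Finset.mul_sum]
  exact Finset.sum_congr rfl fun j _ => Finset.sum_congr rfl fun i _ => by
    simp only [jac, of_apply]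
    ring

theorem inv_sqrt_det_metricP_mul_divergence {L : (Fin d → ℝ) → Matrix (Fin d) (Fin d) ℝ}
    {x y : Fin d → ℝ} (hψ : ContDiffAt ℝ 2 ψ y) (hφ : ContDiffAt ℝ 2 φ x) (hψy : ψ y = x)
    (hφψ : ∀ᶠ z in 𝓝 y, φ (ψ z) = z) (a : Fin d)
    (hH : ∀ j, DifferentiableAt ℝ (fun z => ∑ i, jac φ z a i * (√(g z).det * L z i j)) x) :
    (√(metricP d ψ g y).det)⁻¹ *
        divergence (fun b z => √(metricP d ψ g z).det * tensorP d φ ψ L z a b) y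
      = (√(g x).det)⁻¹ * divergence (fun j z => ∑ i, jac φ z a i * (√(g z).det * L z i j)) x := by
  subst hψy
  have hdet := det_jac_ne_zero (hψ.of_le (by norm_num)) (hφ.of_le (by norm_num)) hφψ
  simp only [sqrt_det_metricP_mul_tensorP]
  rw [divergence_abs_det_jac_mul_sum hψ hφ hφψ hH, sqrt_det_metricP, _root_.mul_inv_rev, mul_assoc,
    inv_mul_cancel_left₀ (abs_ne_zero.mpr hdet)]

end TransformedFields

theorem spurious_drift_transform_general (d : ℕ)
    (U V : Set (Fin d → ℝ)) (hU : IsOpen U) (hV : IsOpen V)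
    (φ ψ : (Fin d → ℝ) → (Fin d → ℝ))
    (hφV : Set.MapsTo φ U V)
    (hψφ : ∀ x ∈ U, ψ (φ x) = x) (hφψ : ∀ y ∈ V, φ (ψ y) = y)
    (hφ : ContDiffOn ℝ 3 φ U) (hψ : ContDiffOn ℝ 3 ψ V)
    (g : (Fin d → ℝ) → Matrix (Fin d) (Fin d) ℝ)
    (hgpos : ∀ x ∈ U, (g x).PosDef)
    (hgC1 : ∀ i j, ContDiffOn ℝ 1 (fun x => g x i j) U)
    (L : (Fin d → ℝ) → Matrix (Fin d) (Fin d) ℝ)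
    (hLC1 : ∀ i j, ContDiffOn ℝ 1 (fun x => L x i j) U) :
    ∀ x ∈ U, ∀ a : Fin d,
      (Real.sqrt (metricP d ψ g (φ x)).det)⁻¹ *
        (∑ b, pd (fun y => Real.sqrt (metricP d ψ g y).det * tensorP d φ ψ L y a b)
          b (φ x)) =
      (∑ i, pd (fun z => φ z a) i x *
        ((Real.sqrt (g x).det)⁻¹ *
          ∑ j, pd (fun z => Real.sqrt (g z).det * L z i j) j x)) +
      (∑ i, ∑ j, pd2 (fun z => φ z a) i j x * ((L x i j + L x j i) / 2)) := by
  intro x hx a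
  have hφx : ContDiffAt ℝ 2 φ x := (hφ.contDiffAt (hU.mem_nhds hx)).of_le (by norm_num)
  have hψy : ContDiffAt ℝ 2 ψ (φ x) := (hψ.contDiffAt (hV.mem_nhds (hφV hx))).of_le (by norm_num)
  have hφψy : ∀ᶠ z in 𝓝 (φ x), φ (ψ z) = z := eventually_of_mem (hV.mem_nhds (hφV hx)) hφψ
  have hρ0 : √(g x).det ≠ 0 := (Real.sqrt_pos.mpr (hgpos x hx).det_pos).ne'
  have hρ : DifferentiableAt ℝ (fun z => √(g z).det) x :=
    (differentiableAt_det fun p q => ((hgC1 p q).contDiffAt (hU.mem_nhds hx)).differentiableAt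
      one_ne_zero).sqrt (Real.sqrt_ne_zero'.mp hρ0).ne'
  have hL : ∀ i j, DifferentiableAt ℝ (fun z => L z i j) x := fun i j =>
    ((hLC1 i j).contDiffAt (hU.mem_nhds hx)).differentiableAt one_ne_zero
  rw [← inv_mul_divergence_jac_mul_mul hφx hρ hρ0 hL a]
  exact inv_sqrt_det_metricP_mul_divergence hψy hφx (hψφ x hx) hφψy a fun j =>
    .fun_sum fun i _ => (differentiableAt_jac hφx a i).mul (hρ.mul (hL i j))

/-- transformation of the spurious drift, Eq. (83): for every
`x ∈ U`, with `y = φ(x)`,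
`(1/√det g') ∂_{y^b}(√det g' L'^{ab})(y)
  = (∂φ^a/∂x^i)(x) (1/√det g) ∂_{x^j}(√det g L^{ij})(x)
    + (∂²φ^a/∂x^i∂x^j)(x) B^{ij}(x)` with `B^{ij} = ½(L^{ij} + L^{ji})`. -/
theorem spurious_drift_transform (d : ℕ) (hd : 1 ≤ d)
    (U V : Set (Fin d → ℝ)) (hU : IsOpen U) (hV : IsOpen V)
    (φ ψ : (Fin d → ℝ) → (Fin d → ℝ))
    (hφV : Set.MapsTo φ U V) (hψU : Set.MapsTo ψ V U)
    (hψφ : ∀ x ∈ U, ψ (φ x) = x) (hφψ : ∀ y ∈ V, φ (ψ y) = y)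
    (hφ : ContDiffOn ℝ 3 φ U) (hψ : ContDiffOn ℝ 3 ψ V)
    (g : (Fin d → ℝ) → Matrix (Fin d) (Fin d) ℝ)
    (hgsymm : ∀ x ∈ U, (g x).IsSymm) (hgpos : ∀ x ∈ U, (g x).PosDef)
    (hgC1 : ∀ i j, ContDiffOn ℝ 1 (fun x => g x i j) U)
    (L : (Fin d → ℝ) → Matrix (Fin d) (Fin d) ℝ)
    (hLC1 : ∀ i j, ContDiffOn ℝ 1 (fun x => L x i j) U) :
    ∀ x ∈ U, ∀ a : Fin d,
      (Real.sqrt (metricP d ψ g (φ x)).det)⁻¹ *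
        (∑ b, pd (fun y => Real.sqrt (metricP d ψ g y).det * tensorP d φ ψ L y a b)
          b (φ x)) =
      (∑ i, pd (fun z => φ z a) i x *
        ((Real.sqrt (g x).det)⁻¹ *
          ∑ j, pd (fun z => Real.sqrt (g z).det * L z i j) j x)) +
      (∑ i, ∑ j, pd2 (fun z => φ z a) i j x * ((L x i j + L x j i) / 2)) :=
  spurious_drift_transform_general d U V hU hV φ ψ hφV hψφ hφψ hφ hψ g hgpos hgC1 L hLC1
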